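/- arXiv:math/0310232 — 2 statements merged into one kernel-verified Lean document; each statement's English description precedes it below -/
import Mathlib

section
/- Fix d ≥ 1, n ≥ 1, γ > 0 and p with 0 < p < 1/4, and suppose P{M_n^{(d)} > γ} ≤ p. Then for every increasing graph property A, writing ε = √p, one has r_A(n, 1 − ε) ≤ r_A(n, ε) + 2γ; that is, δ_A(n, √p) ≤ 2γ. -/
open MeasureTheory Real

noncomputable section

/-- The uniform probability measure on the unit cube `[0,1]^d`. -/
def cubeMeasure (d : ℕ) : Measure (Fin d → ℝ) :=
  Measure.pi fun _ => volume.restrict (Set.Icc (0 : ℝ) 1)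

/-- The joint law of `n` i.i.d. points, each uniform on `[0,1]^d`. -/
def sampleMeasure (d n : ℕ) : Measure (Fin n → Fin d → ℝ) :=
  Measure.pi fun _ => cubeMeasure d

/-- Euclidean distance on `Fin d → ℝ`. -/
def eDist {d : ℕ} (x y : Fin d → ℝ) : ℝ :=
  Real.sqrt (∑ k, (x k - y k) ^ 2)

lemma eDist_comm {d : ℕ} (x y : Fin d → ℝ) : eDist x y = eDist y x := by
  unfold eDist
  congr 1
  exact Finset.sum_congr rfl fun k _ => by ring

/-- The geometric graph on the points `x 0, …, x (n-1)` with radius `r`: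
distinct `i`, `j` are adjacent iff the Euclidean distance of `x i` and `x j` is at most `r`. -/
def geomGraph {d n : ℕ} (x : Fin n → Fin d → ℝ) (r : ℝ) : SimpleGraph (Fin n) where
  Adj i j := i ≠ j ∧ eDist (x i) (x j) ≤ r
  symm := ⟨fun i j h => ⟨h.1.symm, by rw [eDist_comm]; exact h.2⟩⟩
  loopless := ⟨fun i h => h.1 rfl⟩

/-- A graph property (on labelled vertex sets `Fin m`) is closed under isomorphism. -/
def IsoClosed (A : ∀ m, SimpleGraph (Fin m) → Prop) : Prop :=
  ∀ m, ∀ G G' : SimpleGraph (Fin m), Nonempty (G ≃g G') → (A m G ↔ A m G')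

/-- A graph property is increasing: preserved by adding edges. -/
def IncreasingProp (A : ∀ m, SimpleGraph (Fin m) → Prop) : Prop :=
  ∀ m, ∀ G G' : SimpleGraph (Fin m), G ≤ G' → A m G → A m G'

/-- The probability that a random geometric graph on `n` uniform points in `[0,1]^d`
with radius `r` satisfies the property `A`. -/
def geomProb (d n : ℕ) (A : ∀ m, SimpleGraph (Fin m) → Prop) (r : ℝ) : ENNReal :=
  sampleMeasure d n {x | A n (geomGraph x r)}

/-- Threshold radius `r_A(n, ε)`. -/
def thresholdRadius (d n : ℕ) (A : ∀ m, SimpleGraph (Fin m) → Prop) (ε : ℝ) : ℝ :=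
  sInf {r : ℝ | 0 < r ∧ ENNReal.ofReal ε ≤ geomProb d n A r}

/-- Threshold width `δ_A(n, ε) = r_A(n, 1-ε) - r_A(n, ε)`. -/
def thresholdWidth (d n : ℕ) (A : ∀ m, SimpleGraph (Fin m) → Prop) (ε : ℝ) : ℝ :=
  thresholdRadius d n A (1 - ε) - thresholdRadius d n A ε

/-- The bottleneck matching weight between the point sets `x` and `y`. -/
def bottleneck {d n : ℕ} (x y : Fin n → Fin d → ℝ) : ℝ :=
  ⨅ φ : Equiv.Perm (Fin n), ⨆ i, eDist (x i) (y (φ i))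

/-- The joint law of two independent samples of `n` uniform points in `[0,1]^d`. -/
def pairMeasure (d n : ℕ) : Measure ((Fin n → Fin d → ℝ) × (Fin n → Fin d → ℝ)) :=
  (sampleMeasure d n).prod (sampleMeasure d n)

/-- `G` is isomorphic to a subgraph of `G'`. -/
def IsSubgraphIso {n m : ℕ} (G : SimpleGraph (Fin n)) (G' : SimpleGraph (Fin m)) : Prop :=
  ∃ f : Fin n ↪ Fin m, ∀ i j, G.Adj i j → G'.Adj (f i) (f j)

/-- The property: every vertex has degree at least a quarter of the number of vertices. -/
def minDegProp : ∀ m, SimpleGraph (Fin m) → Prop :=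
  fun m G => ∀ v, (m : ℝ) / 4 ≤ ((G.neighborSet v).ncard : ℝ)

/-- The property of being a complete graph. -/
def completeProp : ∀ m, SimpleGraph (Fin m) → Prop :=
  fun m G => ∀ i j : Fin m, i ≠ j → G.Adj i j

/-! Take two independent samples `X`, `Y`. If their bottleneck matching weight is at most `γ`,
the optimal matching carries `G(X; r)` onto a subgraph of `G(Y; r + 2γ)` (triangle inequality),
so an increasing property of the former passes to the latter. Hence
`P(A at r) · P(not A at r + 2γ) ≤ P(M > γ) ≤ p = ε²`, and `P(A at r) ≥ ε` forces
`P(A at r + 2γ) ≥ 1 - ε`. -/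

instance : IsProbabilityMeasure ((volume : Measure ℝ).restrict (Set.Icc (0 : ℝ) 1)) :=
  ⟨by simp⟩

instance (d : ℕ) : IsProbabilityMeasure (cubeMeasure d) := by
  unfold cubeMeasure; infer_instance

instance (d n : ℕ) : IsProbabilityMeasure (sampleMeasure d n) := by
  unfold sampleMeasure; infer_instance

lemma eDist_eq_dist {d : ℕ} (x y : Fin d → ℝ) :
    eDist x y = dist (WithLp.toLp 2 x) (WithLp.toLp 2 y) := by
  simp only [eDist, EuclideanSpace.dist_eq, Real.dist_eq, sq_abs]

lemma eDist_triangle {d : ℕ} (x y z : Fin d → ℝ) : eDist x z ≤ eDist x y + eDist y z := by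
  simpa only [eDist_eq_dist] using dist_triangle _ _ _

lemma exists_perm_forall_eDist_le_of_bottleneck_le {d n : ℕ} {x y : Fin n → Fin d → ℝ} {γ : ℝ}
    (h : bottleneck x y ≤ γ) : ∃ φ : Equiv.Perm (Fin n), ∀ i, eDist (x i) (y (φ i)) ≤ γ := by
  obtain ⟨φ, hφ⟩ := exists_eq_ciInf_of_finite (f := fun φ : Equiv.Perm (Fin n) =>
    ⨆ i, eDist (x i) (y (φ i)))
  exact ⟨φ, fun i => (Finite.le_ciSup (fun i => eDist (x i) (y (φ i))) i).trans (hφ ▸ h)⟩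

lemma geomGraph_le_comap {d n m : ℕ} {x : Fin n → Fin d → ℝ} {y : Fin m → Fin d → ℝ}
    {φ : Fin n → Fin m} (hφ : φ.Injective) {γ : ℝ} (hxy : ∀ i, eDist (x i) (y (φ i)) ≤ γ)
    (r : ℝ) : geomGraph x r ≤ (geomGraph y (r + 2 * γ)).comap φ := by
  rintro i j ⟨hij, hr⟩
  refine ⟨hφ.ne hij, ?_⟩
  calc eDist (y (φ i)) (y (φ j))
      ≤ eDist (y (φ i)) (x i) + (eDist (x i) (x j) + eDist (x j) (y (φ j))) :=
        (eDist_triangle _ _ _).trans (add_le_add_right (eDist_triangle _ _ _) _)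
    _ ≤ γ + (r + γ) := by
        rw [eDist_comm (y (φ i))]; exact add_le_add (hxy i) (add_le_add hr (hxy j))
    _ = r + 2 * γ := by ring

lemma IncreasingProp.of_le_comap_perm {A : ∀ m, SimpleGraph (Fin m) → Prop}
    (hIso : IsoClosed A) (hInc : IncreasingProp A) {m : ℕ} {G G' : SimpleGraph (Fin m)}
    (φ : Equiv.Perm (Fin m)) (hle : G ≤ G'.comap φ) (hA : A m G) : A m G' :=
  hInc m _ _ ((SimpleGraph.map_le_iff_le_comap φ.toEmbedding G G').2 hle)
    ((hIso m G _ ⟨SimpleGraph.Iso.map φ G⟩).1 hA)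

lemma IncreasingProp.geomGraph_add_of_bottleneck_le {A : ∀ m, SimpleGraph (Fin m) → Prop}
    (hIso : IsoClosed A) (hInc : IncreasingProp A) {d n : ℕ} {x y : Fin n → Fin d → ℝ}
    {γ : ℝ} (hb : bottleneck x y ≤ γ) {r : ℝ} (hA : A n (geomGraph x r)) :
    A n (geomGraph y (r + 2 * γ)) := by
  obtain ⟨φ, hφ⟩ := exists_perm_forall_eDist_le_of_bottleneck_le hb
  exact hInc.of_le_comap_perm hIso φ (geomGraph_le_comap φ.injective hφ r) hA

lemma geomProb_mul_le_pairMeasure_bottleneck_gt {A : ∀ m, SimpleGraph (Fin m) → Prop}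
    (hIso : IsoClosed A) (hInc : IncreasingProp A) (d n : ℕ) (r γ : ℝ) :
    geomProb d n A r * sampleMeasure d n {y | A n (geomGraph y (r + 2 * γ))}ᶜ
      ≤ pairMeasure d n {q | γ < bottleneck q.1 q.2} := by
  rw [geomProb, pairMeasure, ← Measure.prod_prod]
  exact measure_mono fun q ⟨hx, hy⟩ =>
    not_le.1 fun hb => hy (hInc.geomGraph_add_of_bottleneck_le hIso hb hx)

lemma ENNReal.le_of_le_of_mul_le_mul_self {a s t : ENNReal} (ha₀ : a ≠ 0) (ha : a ≠ ⊤)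
    (hs : a ≤ s) (h : s * t ≤ a * a) : t ≤ a :=
  (ENNReal.mul_le_mul_iff_right ha₀ ha).1 ((mul_le_mul_left hs t).trans h)

lemma one_sub_le_measure_of_mul_measure_compl_le {α : Type*} [MeasurableSpace α]
    {μ : Measure α} [IsProbabilityMeasure μ] {a : ENNReal} (ha₀ : a ≠ 0) (ha : a ≠ ⊤)
    {S T : Set α} (hS : a ≤ μ S) (h : μ S * μ Tᶜ ≤ a * a) : 1 - a ≤ μ T := by
  rw [tsub_le_iff_right, ← measure_univ (μ := μ)]
  exact (measure_univ_le_add_compl T).trans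
    (add_le_add_right (ENNReal.le_of_le_of_mul_le_mul_self ha₀ ha hS h) _)

/-- `hTS` handles the junk value `sInf ∅ = 0`: it makes `T` empty when `S` is. -/
lemma Real.sInf_le_sInf_add {S T : Set ℝ} {c : ℝ} (hc : 0 ≤ c) (hT : BddBelow T)
    (hTS : T ⊆ S) (h : ∀ r ∈ S, r + c ∈ T) : sInf T ≤ sInf S + c := by
  rcases S.eq_empty_or_nonempty with rfl | hS
  · rw [Set.subset_empty_iff.1 hTS, Real.sInf_empty]; linarith
  · have := le_csInf hS fun r hr => sub_le_iff_le_add.2 (csInf_le hT (h r hr))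
    linarith

lemma thresholdRadius_le_add {d n : ℕ} {A : ∀ m, SimpleGraph (Fin m) → Prop} {a b c : ℝ}
    (hc : 0 ≤ c) (hab : a ≤ b)
    (h : ∀ r, 0 < r → ENNReal.ofReal a ≤ geomProb d n A r →
      ENNReal.ofReal b ≤ geomProb d n A (r + c)) :
    thresholdRadius d n A b ≤ thresholdRadius d n A a + c :=
  Real.sInf_le_sInf_add hc ⟨0, fun _ hr => hr.1.le⟩
    (fun _ hr => ⟨hr.1, (ENNReal.ofReal_le_ofReal hab).trans hr.2⟩)
    fun r hr => ⟨add_pos_of_pos_of_nonneg hr.1 hc, h r hr.1 hr.2⟩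

theorem stmt6_general (d n : ℕ) (γ p : ℝ)
    (hγ : 0 < γ) (hp0 : 0 < p) (hp1 : p < 1 / 4)
    (hM : pairMeasure d n {q | γ < bottleneck q.1 q.2} ≤ ENNReal.ofReal p)
    (A : ∀ m, SimpleGraph (Fin m) → Prop) (hIso : IsoClosed A) (hInc : IncreasingProp A) :
    thresholdRadius d n A (1 - Real.sqrt p) ≤ thresholdRadius d n A (Real.sqrt p) + 2 * γ := by
  set ε := Real.sqrt p
  have hε : 0 < ε := Real.sqrt_pos.2 hp0
  have hε_le : ε ≤ 1 - ε := by
    have : ε ≤ 1 / 2 := Real.sqrt_le_iff.2 ⟨by norm_num, by linarith⟩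
    linarith
  have hM' : pairMeasure d n {q | γ < bottleneck q.1 q.2}
      ≤ ENNReal.ofReal ε * ENNReal.ofReal ε := by
    rwa [← ENNReal.ofReal_mul hε.le, Real.mul_self_sqrt hp0.le]
  refine thresholdRadius_le_add (by positivity) hε_le fun r _ hr => ?_
  rw [ENNReal.ofReal_sub _ hε.le, ENNReal.ofReal_one]
  exact one_sub_le_measure_of_mul_measure_compl_le (ENNReal.ofReal_pos.2 hε).ne'
    ENNReal.ofReal_ne_top hr
    ((geomProb_mul_le_pairMeasure_bottleneck_gt hIso hInc d n r γ).trans hM')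

/-- if the bottleneck matching weight exceeds `γ` with probability at most
`p < 1/4`, then every increasing graph property has `√p`-width at most `2γ`. -/
theorem stmt6 (d n : ℕ) (hd : 1 ≤ d) (hn : 1 ≤ n) (γ p : ℝ)
    (hγ : 0 < γ) (hp0 : 0 < p) (hp1 : p < 1 / 4)
    (hM : pairMeasure d n {q | γ < bottleneck q.1 q.2} ≤ ENNReal.ofReal p)
    (A : ∀ m, SimpleGraph (Fin m) → Prop) (hIso : IsoClosed A) (hInc : IncreasingProp A) :
    thresholdRadius d n A (1 - Real.sqrt p) ≤ thresholdRadius d n A (Real.sqrt p) + 2 * γ :=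
  stmt6_general d n γ p hγ hp0 hp1 hM A hIso hInc
end
end

section
/- There exist constants c > 0 and c′ > 0 such that for every β > 0 and every n ≥ 1, P{M_n^{(1)} ≥ β/√n} ≤ c′·exp(−c·β²). -/
open MeasureTheory Real

noncomputable section

/-! Match both samples in sorted order. If the empirical distribution functions of both samples
stay within `ε` of the identity on `[0,1]`, then the `k`-th smallest points of both lie in
`[(k+1)/n - ε, k/n + ε]`, so this matching has bottleneck at most `2ε`. Once `n ε²` is large,
the probability that this fails is at most `2 exp (-n ε² / 144)`: by dyadic chaining it
suffices to control the counts of the `2^l` dyadic intervals of length `2^-l`, each by a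
Chernoff bound that sees the variance `2^-l` (`E exp (t (1_I - p)) ≤ exp (p t²)` for
`|t| ≤ 1`). Then take `ε = β / (4 √n)`. -/

open Set

instance : IsProbabilityMeasure (volume.restrict (Icc (0 : ℝ) 1)) :=
  ⟨by simp [Real.volume_Icc]⟩

instance inst_s10 (d n : ℕ) : IsProbabilityMeasure (sampleMeasure d n) := by
  unfold sampleMeasure cubeMeasure; infer_instance

instance (d n : ℕ) : IsProbabilityMeasure (pairMeasure d n) := by
  unfold pairMeasure; infer_instance

section Counting

variable {α : Type*} {n : ℕ}

def countIn (s : Set α) (x : Fin n → α) : ℝ :=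
  ∑ j, s.indicator 1 (x j)

lemma countIn_nonneg (s : Set α) (x : Fin n → α) : 0 ≤ countIn s x :=
  Finset.sum_nonneg fun _ _ => indicator_nonneg (fun _ _ => zero_le_one) _

lemma countIn_le (s : Set α) (x : Fin n → α) : countIn s x ≤ n := by
  calc countIn s x ≤ ∑ _j : Fin n, (1 : ℝ) :=
        Finset.sum_le_sum fun _ _ => indicator_le_self' (fun _ _ => zero_le_one) _
    _ = n := by simp

lemma countIn_mono {s t : Set α} (hst : s ⊆ t) (x : Fin n → α) :
    countIn s x ≤ countIn t x :=
  Finset.sum_le_sum fun _ _ => indicator_le_indicator_of_subset hst (fun _ => zero_le_one) _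

lemma countIn_eq_of_forall_mem {s : Set α} {x : Fin n → α} (hx : ∀ j, x j ∈ s) :
    countIn s x = n := by
  simp [countIn, indicator_of_mem (hx _)]

lemma countIn_eq_zero_of_forall_notMem {s : Set α} {x : Fin n → α} (hx : ∀ j, x j ∉ s) :
    countIn s x = 0 := by
  simp [countIn, indicator_of_notMem (hx _)]

lemma countIn_comp_perm (s : Set α) (x : Fin n → α) (σ : Equiv.Perm (Fin n)) :
    countIn s (x ∘ σ) = countIn s x :=
  Equiv.sum_comp σ fun j => s.indicator 1 (x j)

lemma countIn_Iic_sub_countIn_Iic [LinearOrder α] {a b : α} (hab : a ≤ b) (x : Fin n → α) :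
    countIn (Iic b) x - countIn (Iic a) x = countIn (Ioc a b) x := by
  rw [sub_eq_iff_eq_add', countIn, countIn, countIn, ← Finset.sum_add_distrib,
    ← Iic_union_Ioc_eq_Iic hab]
  refine Finset.sum_congr rfl fun j _ => ?_
  exact congrFun (indicator_union_of_disjoint (Iic_disjoint_Ioc (le_refl a)) 1) _

end Counting

section Chernoff

lemma exp_neg_mul_mul_one_add_le {p t : ℝ} (hp : 0 ≤ p) (ht : |t| ≤ 1) :
    exp (-(t * p)) * (1 + p * (exp t - 1)) ≤ exp (p * t ^ 2) := by
  have hquad : exp t - 1 - t ≤ t ^ 2 := (abs_le.1 (Real.abs_exp_sub_one_sub_id_le ht)).2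
  calc exp (-(t * p)) * (1 + p * (exp t - 1))
      ≤ exp (-(t * p)) * exp (p * (exp t - 1)) := by
        gcongr; linarith [Real.add_one_le_exp (p * (exp t - 1))]
    _ = exp (p * (exp t - 1 - t)) := by rw [← Real.exp_add]; ring_nf
    _ ≤ exp (p * t ^ 2) := by gcongr

variable {α : Type*}

lemma exp_mul_indicator_sub (s : Set α) (t p : ℝ) (a : α) :
    exp (t * (s.indicator 1 a - p)) = exp (-(t * p)) * (1 + (exp t - 1) * s.indicator 1 a) := by
  by_cases ha : a ∈ s
  · rw [indicator_of_mem ha, Pi.one_apply, mul_one, add_sub_cancel, ← Real.exp_add]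
    ring_nf
  · simp [indicator_of_notMem ha, sub_eq_add_neg]

variable [MeasurableSpace α] {μ : Measure α} [IsProbabilityMeasure μ] {s : Set α}

lemma integrable_exp_mul_indicator_sub (hs : MeasurableSet s) (t p : ℝ) :
    Integrable (fun a => exp (t * (s.indicator 1 a - p))) μ := by
  simp_rw [exp_mul_indicator_sub]
  exact ((integrable_const 1).add (((integrable_const 1).indicator hs).const_mul _)).const_mul _

lemma integral_exp_mul_indicator_sub_le (hs : MeasurableSet s) {t : ℝ} (ht : |t| ≤ 1) :
    ∫ a, exp (t * (s.indicator 1 a - μ.real s)) ∂μ ≤ exp (μ.real s * t ^ 2) := by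
  simp_rw [exp_mul_indicator_sub]
  rw [integral_const_mul, integral_add (integrable_const _)
    (((integrable_const 1).indicator hs).const_mul _), integral_const_mul,
    integral_indicator_one hs]
  simpa [mul_comm (exp t - 1)] using exp_neg_mul_mul_one_add_le measureReal_nonneg ht

lemma measureReal_le_mul_countIn_sub_le {n : ℕ} (hs : MeasurableSet s) {t r : ℝ}
    (ht : |t| ≤ 1) :
    (Measure.pi fun _ : Fin n => μ).real {x | n * r ≤ t * (countIn s x - n * μ.real s)}
      ≤ exp (n * (μ.real s * t ^ 2 - r)) := by
  set P := Measure.pi fun _ : Fin n => μ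
  set g : α → ℝ := fun a => exp (t * (s.indicator 1 a - μ.real s))
  have hprod : ∀ x : Fin n → α, exp (t * (countIn s x - n * μ.real s)) = ∏ j, g (x j) := by
    intro x
    rw [← Real.exp_sum, ← Finset.mul_sum, Finset.sum_sub_distrib]
    simp [countIn]
  have hmarkov :
      exp (n * r) * P.real {x | exp (n * r) ≤ ∏ j, g (x j)} ≤ ∫ x, ∏ j, g (x j) ∂P :=
    mul_meas_ge_le_integral_of_nonneg
      (ae_of_all P fun x => (Finset.prod_pos fun j _ => exp_pos _).le)
      (Integrable.fintype_prod fun _ => integrable_exp_mul_indicator_sub hs t _) _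
  rw [integral_fintype_prod_eq_pow, Fintype.card_fin] at hmarkov
  have hsub : {x | n * r ≤ t * (countIn s x - n * μ.real s)}
      ⊆ {x | exp (n * r) ≤ ∏ j, g (x j)} := fun x hx => by
    rw [mem_ofPred_eq, ← hprod, exp_le_exp]
    exact hx
  calc P.real _ ≤ P.real {x | exp (n * r) ≤ ∏ j, g (x j)} := measureReal_mono hsub
    _ ≤ (∫ a, g a ∂μ) ^ n / exp (n * r) := by rw [le_div_iff₀' (exp_pos _)]; exact hmarkov
    _ ≤ exp (μ.real s * t ^ 2) ^ n / exp (n * r) := by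
        gcongr
        exact integral_exp_mul_indicator_sub_le hs ht
    _ = exp (n * (μ.real s * t ^ 2 - r)) := by
        rw [← Real.exp_nat_mul, ← Real.exp_sub]; ring_nf

lemma measureReal_le_abs_countIn_sub_le {n : ℕ} (hs : MeasurableSet s) {t r : ℝ}
    (ht₀ : 0 ≤ t) (ht₁ : t ≤ 1) :
    (Measure.pi fun _ : Fin n => μ).real {x | n * r ≤ |countIn s x - n * μ.real s|}
      ≤ 2 * exp (n * (μ.real s * t ^ 2 - t * r)) := by
  have hsub : {x : Fin n → α | n * r ≤ |countIn s x - n * μ.real s|}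
      ⊆ {x | n * (t * r) ≤ t * (countIn s x - n * μ.real s)}
        ∪ {x | n * (t * r) ≤ -t * (countIn s x - n * μ.real s)} := by
    intro x (hx : n * r ≤ |_|)
    rcases le_abs'.1 hx with h | h
    · right; simp only [mem_ofPred_eq]; nlinarith
    · left; simp only [mem_ofPred_eq]; nlinarith
  refine (measureReal_mono hsub).trans ((measureReal_union_le _ _).trans ?_)
  rw [two_mul]
  gcongr
  · exact measureReal_le_mul_countIn_sub_le hs (abs_le.2 ⟨by linarith, ht₁⟩)
  · simpa using measureReal_le_mul_countIn_sub_le (μ := μ) (n := n) hs (t := -t)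
      (r := t * r) (by rw [abs_neg, abs_of_nonneg ht₀]; exact ht₁)

end Chernoff

section Dyadic

lemma abs_le_sum_of_dyadic_increments {D : ℝ → ℝ} (h₀ : D 0 = 0) (h₁ : D 1 = 0) {τ : ℕ → ℝ}
    (hτ : ∀ l, 0 ≤ τ l) {L : ℕ}
    (hinc : ∀ l ∈ Finset.Icc 1 L, ∀ k ∈ Finset.Icc (1 : ℕ) (2 ^ l),
      |D (k / 2 ^ l) - D ((k - 1) / 2 ^ l)| ≤ τ l) :
    ∀ k : ℕ, k ≤ 2 ^ L → |D (k / 2 ^ L)| ≤ ∑ l ∈ Finset.Icc 1 L, τ l := by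
  induction L with
  | zero =>
    intro k hk
    interval_cases k <;> simp [h₀, h₁]
  | succ L ih =>
    have ih := ih fun l hl k hk =>
      hinc l (Finset.Icc_subset_Icc_right L.le_succ hl) k hk
    rw [Finset.sum_Icc_succ_top (by omega)]
    intro k hk
    rw [pow_succ] at hk
    obtain ⟨m, rfl | rfl⟩ := Nat.even_or_odd' k
    · have hcoarse : ((2 * m : ℕ) : ℝ) / 2 ^ (L + 1) = m / 2 ^ L := by
        push_cast; rw [pow_succ]; field_simp
      rw [hcoarse]
      linarith [ih m (by omega), hτ (L + 1)]
    · have hleft : (((2 * m + 1 : ℕ) : ℝ) - 1) / 2 ^ (L + 1) = m / 2 ^ L := by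
        push_cast; rw [pow_succ]; field_simp; ring
      have hfine := hinc (L + 1) (Finset.mem_Icc.2 ⟨by omega, le_rfl⟩) (2 * m + 1)
        (Finset.mem_Icc.2 ⟨by omega, by rw [pow_succ]; omega⟩)
      rw [hleft] at hfine
      calc |D ((2 * m + 1 : ℕ) / 2 ^ (L + 1))|
          = |D (m / 2 ^ L) + (D ((2 * m + 1 : ℕ) / 2 ^ (L + 1)) - D (m / 2 ^ L))| := by
            rw [add_sub_cancel]
        _ ≤ _ := (abs_add_le _ _).trans (add_le_add (ih m (by omega)) hfine)

lemma exists_dyadic_bracket {s : ℝ} (hs : s ∈ Icc (0 : ℝ) 1) (L : ℕ) :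
    ∃ k : ℕ, k + 1 ≤ 2 ^ L ∧ (k : ℝ) / 2 ^ L ≤ s ∧ s ≤ (k + 1) / 2 ^ L := by
  have hL : (0 : ℝ) < 2 ^ L := by positivity
  rcases hs.2.lt_or_eq with hs1 | rfl
  · refine ⟨⌊s * 2 ^ L⌋₊, ?_, ?_, ?_⟩
    · have : ⌊s * 2 ^ L⌋₊ < 2 ^ L := by
        rw [Nat.floor_lt (by nlinarith [hs.1])]
        push_cast; nlinarith
      omega
    · rw [div_le_iff₀ hL]; exact Nat.floor_le (by nlinarith [hs.1])
    · rw [le_div_iff₀ hL]; exact (Nat.lt_floor_add_one _).le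
  · refine ⟨2 ^ L - 1, by have := Nat.one_le_two_pow (n := L); omega, ?_, ?_⟩
    · rw [div_le_one hL]; exact_mod_cast Nat.sub_le _ _
    · rw [Nat.cast_sub Nat.one_le_two_pow]; push_cast; rw [sub_add_cancel, div_self hL.ne']

lemma abs_sub_mul_le_of_dyadic_grid {F : ℝ → ℝ} (hF : Monotone F) {c δ : ℝ} (hc : 0 ≤ c)
    {L : ℕ} (hgrid : ∀ k : ℕ, k ≤ 2 ^ L → |F (k / 2 ^ L) - c * (k / 2 ^ L)| ≤ δ)
    {s : ℝ} (hs : s ∈ Icc (0 : ℝ) 1) :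
    |F s - c * s| ≤ δ + c / 2 ^ L := by
  obtain ⟨k, hk, hks, hsk⟩ := exists_dyadic_bracket hs L
  have hlo := abs_le.1 (hgrid k (by omega))
  have hhi := abs_le.1 (hgrid (k + 1) hk)
  push_cast at hhi
  have hstep : ((k : ℝ) + 1) / 2 ^ L = k / 2 ^ L + 1 / 2 ^ L := by ring
  have hc' : c / 2 ^ L = c * (1 / 2 ^ L) := by ring
  rw [hstep] at hhi hsk
  rw [hc']
  have := hF hks
  have := hF hsk
  rw [abs_le]
  constructor <;> nlinarith [mul_le_mul_of_nonneg_left hks hc, mul_le_mul_of_nonneg_left hsk hc]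

end Dyadic

section OrderStatistics

variable {α : Type*} {n : ℕ}

open Classical in
lemma countIn_eq_card (s : Set α) (x : Fin n → α) :
    countIn s x = (Finset.univ.filter fun j => x j ∈ s).card := by
  simp [countIn, indicator_apply]

variable [LinearOrder α] (u : Fin n → α) (k : Fin n)

lemma le_countIn_Iic_sort : (k : ℝ) + 1 ≤ countIn (Iic (u (Tuple.sort u k))) u := by
  rw [← countIn_comp_perm _ u (Tuple.sort u), countIn_eq_card]
  calc (k : ℝ) + 1 = (Finset.Iic k).card := by simp
    _ ≤ _ := Nat.cast_le.2 <| Finset.card_le_card fun m hm => by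
      simpa using Tuple.monotone_sort u (Finset.mem_Iic.1 hm)

lemma countIn_Iic_le_of_lt_sort {a : α} (ha : a < u (Tuple.sort u k)) :
    countIn (Iic a) u ≤ k := by
  rw [← countIn_comp_perm _ u (Tuple.sort u), countIn_eq_card]
  calc _ ≤ ((Finset.Iio k).card : ℝ) := Nat.cast_le.2 <| Finset.card_le_card fun m hm => by
        simp only [Finset.mem_filter, Finset.mem_univ, true_and, Function.comp_apply,
          mem_Iic] at hm
        exact Finset.mem_Iio.2 (lt_of_not_ge fun hkm =>
          (hm.trans_lt ha).not_ge (Tuple.monotone_sort u hkm))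
    _ = k := by simp

end OrderStatistics

section StarDiscrepancy

variable {n : ℕ}

def StarDiscrepancyLE (ε : ℝ) (u : Fin n → ℝ) : Prop :=
  ∀ s ∈ Icc (0 : ℝ) 1, |countIn (Iic s) u - n * s| ≤ n * ε

lemma starDiscrepancyLE_of_one_le {ε : ℝ} (hε : 1 ≤ ε) (u : Fin n → ℝ) :
    StarDiscrepancyLE ε u := by
  intro s hs
  have := countIn_nonneg (Iic s) u
  have := countIn_le (Iic s) u
  have hn : (0 : ℝ) ≤ n := n.cast_nonneg
  rw [abs_le]
  constructor <;> nlinarith [hs.1, hs.2]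

lemma starDiscrepancyLE_of_dyadic_increments {u : Fin n → ℝ}
    (hu : ∀ j, u j ∈ Ioc (0 : ℝ) 1) {ε : ℝ} {τ : ℕ → ℝ} (hτ : ∀ l, 0 ≤ τ l) {L : ℕ}
    (hτL : ∑ l ∈ Finset.Icc 1 L, τ l ≤ ε / 2) (hL : 1 / 2 ^ L ≤ ε / 2)
    (hinc : ∀ l ∈ Finset.Icc 1 L, ∀ k ∈ Finset.Icc (1 : ℕ) (2 ^ l),
      |countIn (Ioc (((k : ℝ) - 1) / 2 ^ l) (k / 2 ^ l)) u - n / 2 ^ l|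
        ≤ n * τ l) :
    StarDiscrepancyLE ε u := by
  have hn : (0 : ℝ) ≤ n := n.cast_nonneg
  have hchain := abs_le_sum_of_dyadic_increments (D := fun s => countIn (Iic s) u - n * s)
    (by simpa using
      countIn_eq_zero_of_forall_notMem (s := Iic 0) (x := u) fun j => not_le.2 (hu j).1)
    (by rw [countIn_eq_of_forall_mem (s := Iic 1) (x := u) fun j => (hu j).2]; ring)
    (fun l => mul_nonneg hn (hτ l)) (L := L) fun l _ k hk => by
      have hk1 : (1 : ℝ) ≤ k := by exact_mod_cast (Finset.mem_Icc.1 hk).1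
      have hab : ((k : ℝ) - 1) / 2 ^ l ≤ k / 2 ^ l := by gcongr; linarith
      rw [sub_sub_sub_comm, countIn_Iic_sub_countIn_Iic hab, ← mul_sub,
        show (k : ℝ) / 2 ^ l - (k - 1) / 2 ^ l = 1 / 2 ^ l by ring, mul_one_div]
      exact hinc l ‹_› k hk
  intro s hs
  calc |countIn (Iic s) u - n * s|
      ≤ n * (ε / 2) + n / 2 ^ L :=
        abs_sub_mul_le_of_dyadic_grid (fun a b hab => countIn_mono (Iic_subset_Iic.2 hab) u) hn
          (fun k hk => (hchain k hk).trans (by rw [← Finset.mul_sum]; gcongr)) hs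
    _ ≤ n * ε := by
        have : (n : ℝ) / 2 ^ L ≤ n * (ε / 2) := by
          rw [div_eq_mul_one_div]; exact mul_le_mul_of_nonneg_left hL hn
        linarith

lemma sort_mem_Icc_of_starDiscrepancyLE {u : Fin n → ℝ} (hu : ∀ j, u j ∈ Icc (0 : ℝ) 1)
    {ε : ℝ} (hε : 0 ≤ ε) (hd : StarDiscrepancyLE ε u) (k : Fin n) :
    u (Tuple.sort u k) ∈ Icc (((k : ℝ) + 1) / n - ε) (k / n + ε) := by
  have hn : (0 : ℝ) < n := by exact_mod_cast k.pos
  have hkn : (k : ℝ) / n * n = k := div_mul_cancel₀ _ hn.ne'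
  set w := u (Tuple.sort u k)
  have hw := hu (Tuple.sort u k)
  constructor
  · have hcount := le_countIn_Iic_sort u k
    have hdev := (abs_le.1 (hd w hw)).2
    rw [div_sub' hn.ne', div_le_iff₀ hn]
    nlinarith
  · by_contra! hlt
    obtain ⟨a, hka, haw⟩ := exists_between hlt
    have hcount := countIn_Iic_le_of_lt_sort u k haw
    have hkn0 : (0 : ℝ) ≤ k / n := by positivity
    have hdev := (abs_le.1 (hd a ⟨by linarith, by linarith [hw.2]⟩)).1
    nlinarith [mul_lt_mul_of_pos_left hka hn]

lemma bottleneck_le_of_perm {d : ℕ} {x y : Fin n → Fin d → ℝ} (φ : Equiv.Perm (Fin n))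
    {r : ℝ} (hr : 0 ≤ r) (h : ∀ i, eDist (x i) (y (φ i)) ≤ r) : bottleneck x y ≤ r :=
  (ciInf_le ⟨0, forall_mem_range.2 fun _ => Real.iSup_nonneg fun _ => Real.sqrt_nonneg _⟩
    φ).trans (Real.iSup_le h hr)

lemma eDist_fin_one (a b : Fin 1 → ℝ) : eDist a b = |a 0 - b 0| := by
  simp [eDist, Real.sqrt_sq_eq_abs]

lemma bottleneck_le_of_starDiscrepancyLE {x y : Fin n → Fin 1 → ℝ} {ε : ℝ} (hε : 0 ≤ ε)
    (hx : ∀ j, x j 0 ∈ Icc (0 : ℝ) 1) (hy : ∀ j, y j 0 ∈ Icc (0 : ℝ) 1)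
    (hdx : StarDiscrepancyLE ε fun j => x j 0) (hdy : StarDiscrepancyLE ε fun j => y j 0) :
    bottleneck x y ≤ 2 * ε := by
  set σ := Tuple.sort fun j => x j 0
  set τ := Tuple.sort fun j => y j 0
  refine bottleneck_le_of_perm (σ.symm.trans τ) (by positivity) fun i => ?_
  obtain ⟨k, rfl⟩ := σ.surjective i
  have hxk := sort_mem_Icc_of_starDiscrepancyLE hx hε hdx k
  have hyk := sort_mem_Icc_of_starDiscrepancyLE hy hε hdy k
  have hn : (0 : ℝ) < n := by exact_mod_cast k.pos
  have hsucc : ((k : ℝ) + 1) / n = k / n + 1 / n := add_div _ _ _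
  have : 0 ≤ 1 / (n : ℝ) := by positivity
  rw [eDist_fin_one, Equiv.trans_apply, Equiv.symm_apply_apply, abs_le]
  simp only [mem_Icc] at hxk hyk
  constructor <;> linarith

end StarDiscrepancy

lemma two_pow_mul_exp_neg_le {γ : ℝ} (hγ : 16 ≤ γ) (l : ℕ) :
    2 ^ l * exp (-(γ * (9 / 8) ^ l)) ≤ exp (-γ) * (1 / 2) ^ l := by
  have hbernoulli : 1 + l * (1 / 8 : ℝ) ≤ (9 / 8) ^ l := by
    have := one_add_mul_le_pow (by norm_num : (-2 : ℝ) ≤ 1 / 8) l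
    norm_num at this ⊢
    linarith
  have he2 : 4 ≤ exp 2 := by
    have := Real.add_one_le_exp 1
    rw [show (2 : ℝ) = 1 + 1 by norm_num, Real.exp_add]
    nlinarith
  calc 2 ^ l * exp (-(γ * (9 / 8) ^ l)) ≤ 2 ^ l * exp (-γ + l * (-2)) := by
        gcongr
        nlinarith
    _ = exp (-γ) * (2 * exp (-2)) ^ l := by
        rw [mul_pow, Real.exp_add, Real.exp_nat_mul]
        ring
    _ ≤ exp (-γ) * (1 / 2) ^ l := by
        gcongr
        rw [Real.exp_neg, ← div_eq_mul_inv, div_le_iff₀ (by positivity)]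
        linarith

lemma dyadic_chernoff_exponent (n ε : ℝ) (l : ℕ) :
    n * (1 / 2 ^ l * (ε / 12 * (3 / 2) ^ l) ^ 2 - ε / 12 * (3 / 2) ^ l * (ε / 6 * (3 / 4) ^ l))
      = -(n * ε ^ 2 / 144 * (9 / 8) ^ l) := by
  have h₁ : ((3 : ℝ) / 2) ^ l * (3 / 4) ^ l = (9 / 8) ^ l := by rw [← mul_pow]; norm_num
  have h₂ : (((3 : ℝ) / 2) ^ l) ^ 2 = (9 / 8) ^ l * 2 ^ l := by
    rw [← pow_mul, mul_comm l 2, pow_mul, ← mul_pow]; norm_num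
  rw [mul_pow, h₂, show ε / 12 * (3 / 2) ^ l * (ε / 6 * (3 / 4) ^ l)
    = ε ^ 2 / 72 * ((3 / 2) ^ l * (3 / 4) ^ l) by ring, h₁]
  field_simp
  ring

lemma exists_two_pow_between {x : ℝ} (hx : 1 ≤ x) :
    ∃ L : ℕ, x ≤ 2 ^ L ∧ (2 : ℝ) ^ L ≤ 2 * x := by
  obtain ⟨m, hm₁, hm₂⟩ := exists_nat_pow_near hx one_lt_two
  exact ⟨m + 1, hm₂.le, by rw [pow_succ]; linarith⟩

lemma sum_pow_Icc_one_le {x : ℝ} (hx₀ : 0 ≤ x) (hx₁ : x < 1) (L : ℕ) :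
    ∑ l ∈ Finset.Icc 1 L, x ^ l ≤ x / (1 - x) := by
  rw [← Finset.Ico_add_one_right_eq_Icc]
  simpa using geom_sum_Ico_le_of_lt_one (m := 1) (n := L + 1) hx₀ hx₁

section UniformSample

local notation "ν" => volume.restrict (Icc (0 : ℝ) 1)

/-- Points in `Ioc 0 1` rather than `Icc 0 1` (an almost sure event) make the empirical count
vanish at `0`, which anchors the dyadic chaining. -/
def wellSpread (n : ℕ) (ε : ℝ) : Set (Fin n → ℝ) :=
  {u | (∀ j, u j ∈ Ioc (0 : ℝ) 1) ∧ StarDiscrepancyLE ε u}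

lemma measureReal_unitInterval_Ioc {a b : ℝ} (ha : 0 ≤ a) (hab : a ≤ b) (hb : b ≤ 1) :
    Measure.real ν (Ioc a b) = b - a := by
  rw [measureReal_restrict_apply measurableSet_Ioc,
    inter_eq_left.2 (Ioc_subset_Icc_self.trans (Icc_subset_Icc ha hb)), measureReal_def,
    Real.volume_Ioc, ENNReal.toReal_ofReal (by linarith)]

lemma measure_exists_notMem_Ioc_eq_zero (n : ℕ) :
    (Measure.pi fun _ : Fin n => ν) {u | ∃ j, u j ∉ Ioc (0 : ℝ) 1} = 0 := by
  have hcompl : ν (Ioc (0 : ℝ) 1)ᶜ = 0 := by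
    rw [measure_compl measurableSet_Ioc (measure_ne_top _ _), measure_univ,
      ← ofReal_measureReal, measureReal_unitInterval_Ioc le_rfl zero_le_one le_rfl]
    simp
  have hunion : {u : Fin n → ℝ | ∃ j, u j ∉ Ioc (0 : ℝ) 1}
      = ⋃ j, Function.eval j ⁻¹' (Ioc (0 : ℝ) 1)ᶜ := by
    ext u; simp
  rw [hunion]
  exact measure_iUnion_null fun j => Measure.pi_eval_preimage_null _ hcompl

/-- The thresholds `n ε/6 (3/4)^l` sum to at most `n ε/2` over the levels; with the Chernoff
parameter `ε/12 (3/2)^l` the tail of a level-`l` interval becomes `exp (-n ε²/144 (9/8)^l)`,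
whose growth in `l` beats the `2^l` intervals of the level. -/
def dyadicDeviationSet (n : ℕ) (ε : ℝ) (l : ℕ) : Set (Fin n → ℝ) :=
  ⋃ k ∈ Finset.Icc (1 : ℕ) (2 ^ l), {u | n * (ε / 6 * (3 / 4) ^ l)
    < |countIn (Ioc (((k : ℝ) - 1) / 2 ^ l) (k / 2 ^ l)) u - n / 2 ^ l|}

lemma measureReal_dyadicDeviationSet_le {n L l : ℕ} {ε : ℝ} (hε : 0 < ε)
    (hL : (2 : ℝ) ^ L ≤ 4 / ε) (hl : l ≤ L) :
    (Measure.pi fun _ : Fin n => ν).real (dyadicDeviationSet n ε l)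
      ≤ 2 ^ l * (2 * exp (-(n * ε ^ 2 / 144 * (9 / 8) ^ l))) := by
  refine (measureReal_biUnion_finset_le _ _).trans ?_
  calc _ ≤ ∑ _k ∈ Finset.Icc (1 : ℕ) (2 ^ l), 2 * exp (-(n * ε ^ 2 / 144 * (9 / 8) ^ l)) :=
        Finset.sum_le_sum fun k hk => ?_
    _ = _ := by simp
  have hk1 : (1 : ℝ) ≤ k := by exact_mod_cast (Finset.mem_Icc.1 hk).1
  have hk2 : (k : ℝ) ≤ 2 ^ l := by exact_mod_cast (Finset.mem_Icc.1 hk).2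
  have hlen : (k : ℝ) / 2 ^ l - (k - 1) / 2 ^ l = 1 / 2 ^ l := by ring
  have hmass := measureReal_unitInterval_Ioc (a := ((k : ℝ) - 1) / 2 ^ l)
    (b := k / 2 ^ l) (by positivity) (by gcongr; linarith) (by rwa [div_le_one (by positivity)])
  have ht : ε / 12 * (3 / 2) ^ l ≤ 1 :=
    calc ε / 12 * (3 / 2) ^ l ≤ ε / 12 * (4 / ε) := by
          gcongr
          exact (pow_le_pow_left₀ (by norm_num) (by norm_num) l).trans
            ((pow_le_pow_right₀ (by norm_num) hl).trans hL)
      _ ≤ 1 := by rw [div_mul_div_comm, div_le_one (by positivity)]; linarith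
  have hchernoff := measureReal_le_abs_countIn_sub_le (n := n) (μ := ν)
    (measurableSet_Ioc (a := ((k : ℝ) - 1) / 2 ^ l) (b := k / 2 ^ l)) (by positivity) ht
    (r := ε / 6 * (3 / 4) ^ l)
  rw [hmass, hlen, mul_one_div, dyadic_chernoff_exponent] at hchernoff
  refine (measureReal_mono ?_).trans hchernoff
  exact fun u hu => mem_ofPred.2 (mem_ofPred.1 hu).le

lemma measureReal_biUnion_dyadicDeviationSet_le {n L : ℕ} {ε : ℝ} (hε : 0 < ε)
    (hL : (2 : ℝ) ^ L ≤ 4 / ε) (hγ : 16 ≤ n * ε ^ 2 / 144) :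
    (Measure.pi fun _ : Fin n => ν).real
        (⋃ l ∈ Finset.Icc 1 L, dyadicDeviationSet n ε l)
      ≤ 2 * exp (-(n * ε ^ 2 / 144)) := by
  calc _ ≤ ∑ l ∈ Finset.Icc 1 L, 2 ^ l * (2 * exp (-(n * ε ^ 2 / 144 * (9 / 8) ^ l))) :=
        (measureReal_biUnion_finset_le _ _).trans <| Finset.sum_le_sum fun l hl =>
          measureReal_dyadicDeviationSet_le hε hL (Finset.mem_Icc.1 hl).2
    _ ≤ ∑ l ∈ Finset.Icc 1 L, 2 * exp (-(n * ε ^ 2 / 144)) * (1 / 2) ^ l :=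
        Finset.sum_le_sum fun l _ => by
          rw [mul_left_comm, mul_assoc]
          exact mul_le_mul_of_nonneg_left (two_pow_mul_exp_neg_le hγ l) zero_le_two
    _ ≤ 2 * exp (-(n * ε ^ 2 / 144)) := by
        rw [← Finset.mul_sum]
        exact mul_le_of_le_one_right (by positivity)
          ((sum_pow_Icc_one_le (by norm_num) (by norm_num) L).trans_eq (by norm_num))

lemma compl_wellSpread_subset {n L : ℕ} {ε : ℝ} (hL : 1 / 2 ^ L ≤ ε / 2) :
    (wellSpread n ε)ᶜ ⊆ {u | ∃ j, u j ∉ Ioc (0 : ℝ) 1}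
      ∪ ⋃ l ∈ Finset.Icc 1 L, dyadicDeviationSet n ε l := by
  have hε : 0 ≤ ε := by linarith [show (0 : ℝ) < 1 / 2 ^ L by positivity]
  intro u hu
  by_contra hout
  rw [mem_union, not_or] at hout
  have hIoc : ∀ j, u j ∈ Ioc (0 : ℝ) 1 := by simpa using hout.1
  refine hu ⟨hIoc, starDiscrepancyLE_of_dyadic_increments hIoc
    (τ := fun l => ε / 6 * (3 / 4) ^ l) (fun l => by positivity) ?_ hL fun l hl k hk => ?_⟩
  · rw [← Finset.mul_sum]
    calc ε / 6 * ∑ l ∈ Finset.Icc 1 L, (3 / 4 : ℝ) ^ l ≤ ε / 6 * 3 := by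
          gcongr
          exact (sum_pow_Icc_one_le (by norm_num) (by norm_num) _).trans_eq (by norm_num)
      _ = ε / 2 := by ring
  · by_contra! hlarge
    exact hout.2 (mem_biUnion hl (mem_biUnion hk hlarge))

lemma measure_compl_wellSpread_le {n : ℕ} {ε : ℝ} (hε : 0 < ε)
    (hγ : 16 ≤ n * ε ^ 2 / 144) :
    (Measure.pi fun _ : Fin n => ν) (wellSpread n ε)ᶜ
      ≤ ENNReal.ofReal (2 * exp (-(n * ε ^ 2 / 144))) := by
  set P := Measure.pi fun _ : Fin n => ν
  rcases le_or_gt 1 ε with hε1 | hε1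
  · calc P _ ≤ P {u | ∃ j, u j ∉ Ioc (0 : ℝ) 1} := measure_mono fun u hu => by
          by_contra hN
          exact hu ⟨by simpa using hN, starDiscrepancyLE_of_one_le hε1 u⟩
      _ = 0 := measure_exists_notMem_Ioc_eq_zero n
      _ ≤ _ := by simp
  obtain ⟨L, hL₁, hL₂⟩ := exists_two_pow_between (x := 2 / ε) (by rw [le_div_iff₀ hε]; linarith)
  have hL : 1 / 2 ^ L ≤ ε / 2 := by
    rw [div_le_iff₀ hε] at hL₁
    rw [div_le_div_iff₀ (by positivity) two_pos]
    linarith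
  calc P _ ≤ P {u | ∃ j, u j ∉ Ioc (0 : ℝ) 1}
        + P (⋃ l ∈ Finset.Icc 1 L, dyadicDeviationSet n ε l) :=
        (measure_mono (compl_wellSpread_subset hL)).trans (measure_union_le _ _)
    _ = ENNReal.ofReal (P.real (⋃ l ∈ Finset.Icc 1 L, dyadicDeviationSet n ε l)) := by
        rw [measure_exists_notMem_Ioc_eq_zero, zero_add, ofReal_measureReal (measure_ne_top _ _)]
    _ ≤ _ := ENNReal.ofReal_le_ofReal (measureReal_biUnion_dyadicDeviationSet_le hε
        (hL₂.trans_eq (by ring)) hγ)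

lemma sampleMeasure_one_coord_preimage (n : ℕ) (S : Set (Fin n → ℝ)) :
    sampleMeasure 1 n {x | (fun j => x j 0) ∈ S}
      = (Measure.pi fun _ : Fin n => ν) S :=
  MeasurePreserving.measure_preimage_equiv
    (f := MeasurableEquiv.piCongrRight fun _ => MeasurableEquiv.funUnique (Fin 1) ℝ)
    (measurePreserving_pi _ _ fun _ => measurePreserving_funUnique _ _) S

lemma pairMeasure_le_two_mul {d n : ℕ} {E : Set ((Fin n → Fin d → ℝ) × (Fin n → Fin d → ℝ))}
    {B : Set (Fin n → Fin d → ℝ)} (hE : E ⊆ {q | q.1 ∈ B ∨ q.2 ∈ B}) :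
    pairMeasure d n E ≤ 2 * sampleMeasure d n B := by
  have hsplit : {q : (Fin n → Fin d → ℝ) × (Fin n → Fin d → ℝ) | q.1 ∈ B ∨ q.2 ∈ B}
      = B ×ˢ univ ∪ univ ×ˢ B := by
    ext q; simp
  refine (measure_mono (hE.trans hsplit.le)).trans ((measure_union_le _ _).trans_eq ?_)
  rw [pairMeasure, Measure.prod_prod, Measure.prod_prod, measure_univ, mul_one, one_mul, two_mul]

lemma pairMeasure_le_bottleneck_le {n : ℕ} {ε r : ℝ} (hε : 0 ≤ ε) (hr : 2 * ε < r) :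
    pairMeasure 1 n {q | r ≤ bottleneck q.1 q.2}
      ≤ 2 * (Measure.pi fun _ : Fin n => ν) (wellSpread n ε)ᶜ := by
  rw [← sampleMeasure_one_coord_preimage]
  refine pairMeasure_le_two_mul fun q (hq : r ≤ _) => ?_
  by_contra hout
  simp only [mem_ofPred_eq, mem_compl_iff, not_or, not_not, wellSpread] at hout
  have := bottleneck_le_of_starDiscrepancyLE hε (fun j => Ioc_subset_Icc_self (hout.1.1 j))
    (fun j => Ioc_subset_Icc_self (hout.2.1 j)) hout.1.2 hout.2.2
  linarith

end UniformSample

/-- in dimension `d = 1`, `P{M_n ≥ β/√n} ≤ c'·exp(-c·β²)`. -/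
theorem stmt10 :
    ∃ c : ℝ, 0 < c ∧ ∃ c' : ℝ, 0 < c' ∧
      ∀ β : ℝ, 0 < β → ∀ n : ℕ, 1 ≤ n →
        pairMeasure 1 n {q | β / Real.sqrt n ≤ bottleneck q.1 q.2}
          ≤ ENNReal.ofReal (c' * Real.exp (-c * β ^ 2)) := by
  refine ⟨1 / 2304, by norm_num, 4 * exp 16, by positivity, fun β hβ n hn => ?_⟩
  have hsqrt : 0 < √(n : ℝ) := Real.sqrt_pos.2 (by exact_mod_cast hn)
  set ε := β / (4 * √(n : ℝ))
  have hε : 0 < ε := by positivity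
  have hγ : n * ε ^ 2 / 144 = β ^ 2 / 2304 := by
    rw [div_pow, mul_pow, Real.sq_sqrt (by positivity)]
    field_simp
    ring
  have hconst : 4 * exp 16 * exp (-(1 / 2304) * β ^ 2) = 4 * exp (16 - β ^ 2 / 2304) := by
    rw [mul_assoc, ← Real.exp_add]; ring_nf
  rw [hconst]
  rcases lt_or_ge (β ^ 2 / 2304) 16 with hsmall | hlarge
  · refine prob_le_one.trans (ENNReal.one_le_ofReal.2 ?_)
    linarith [Real.one_le_exp (sub_nonneg.2 hsmall.le)]
  have h2ε : 2 * ε < β / √(n : ℝ) := by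
    have : 2 * ε = β / √(n : ℝ) / 2 := by simp only [ε]; ring
    linarith [div_pos hβ hsqrt]
  calc _ ≤ 2 * ENNReal.ofReal (2 * exp (-(n * ε ^ 2 / 144))) :=
        (pairMeasure_le_bottleneck_le hε.le h2ε).trans
          (by gcongr; exact measure_compl_wellSpread_le hε (hγ ▸ hlarge))
    _ = ENNReal.ofReal (4 * exp (-(β ^ 2 / 2304))) := by
        rw [hγ, ← ENNReal.ofReal_ofNat 2, ← ENNReal.ofReal_mul zero_le_two]
        ring_nf
    _ ≤ _ := by gcongr; linarith

end
end
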